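/- For an edge e of the complete graph K_n with n ≥ 3, the graph K_n − e is the unique graph with maximum SLEE among all graphs on n vertices with diameter 2. -/

import Mathlib

open scoped Classical

variable {V : Type*}

/-- The signless Laplacian matrix `Q = D + A` of a graph. -/
noncomputable def sLap (G : SimpleGraph V) [Fintype V] : Matrix V V ℝ :=
  Matrix.diagonal (fun v => (G.degree v : ℝ)) + G.adjMatrix ℝ

theorem sLap_isHermitian (G : SimpleGraph V) [Fintype V] : (sLap G).IsHermitian := by
  unfold sLap
  rw [Matrix.IsHermitian, Matrix.conjTranspose_eq_transpose_of_trivial, Matrix.transpose_add,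
    Matrix.diagonal_transpose, SimpleGraph.transpose_adjMatrix]

/-- The Laplacian matrix `L = D - A` of a graph. -/
noncomputable def lap (G : SimpleGraph V) [Fintype V] : Matrix V V ℝ :=
  Matrix.diagonal (fun v => (G.degree v : ℝ)) - G.adjMatrix ℝ

theorem lap_isHermitian (G : SimpleGraph V) [Fintype V] : (lap G).IsHermitian := by
  unfold lap
  rw [Matrix.IsHermitian, Matrix.conjTranspose_eq_transpose_of_trivial, Matrix.transpose_sub,
    Matrix.diagonal_transpose, SimpleGraph.transpose_adjMatrix]

/-- The signless Laplacian Estrada index: the sum of `exp qᵢ` over the eigenvalues of `Q`. -/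
noncomputable def SLEE (G : SimpleGraph V) [Fintype V] : ℝ :=
  ∑ i, Real.exp ((sLap_isHermitian G).eigenvalues i)

/-- The Laplacian Estrada index: the sum of `exp μᵢ` over the eigenvalues of `L`. -/
noncomputable def LEE (G : SimpleGraph V) [Fintype V] : ℝ :=
  ∑ i, Real.exp ((lap_isHermitian G).eigenvalues i)

/-- Semi-edge walks of length `k` from `x` to `y`: a sequence of `k+1` vertices and `k`
edges of `G` such that consecutive vertices are (not necessarily distinct) endpoints of
the intervening edge. -/
def semiEdgeWalks (G : SimpleGraph V) (k : ℕ) (x y : V) :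
    Set ((Fin (k + 1) → V) × (Fin k → Sym2 V)) :=
  {w | w.1 0 = x ∧ w.1 (Fin.last k) = y ∧
    ∀ i : Fin k, w.2 i ∈ G.edgeSet ∧ w.1 i.castSucc ∈ w.2 i ∧ w.1 i.succ ∈ w.2 i}

/-- Closed semi-edge walks of length `k` in `G`. -/
def closedSemiEdgeWalks (G : SimpleGraph V) (k : ℕ) :
    Set ((Fin (k + 1) → V) × (Fin k → Sym2 V)) :=
  {w | w.1 0 = w.1 (Fin.last k) ∧
    ∀ i : Fin k, w.2 i ∈ G.edgeSet ∧ w.1 i.castSucc ∈ w.2 i ∧ w.1 i.succ ∈ w.2 i}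

/-- The number of connected components of a graph. -/
noncomputable def numComponents (G : SimpleGraph V) : ℕ := Nat.card G.ConnectedComponent

/-- A cut vertex: a vertex whose removal increases the number of connected components. -/
def IsCutVertex (G : SimpleGraph V) (v : V) : Prop :=
  numComponents G < numComponents (G.induce ({v}ᶜ : Set V))

/-- The number of cut vertices of a graph. -/
noncomputable def cutVertexCount (G : SimpleGraph V) [Fintype V] : ℕ :=
  (Finset.univ.filter (fun v => IsCutVertex G v)).card

/-- The graph obtained from `G` by adding the edge `uv`. -/
def addEdge (G : SimpleGraph V) (u v : V) : SimpleGraph V :=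
  G ⊔ SimpleGraph.fromEdgeSet {s(u, v)}

/-- A block of `G`: a maximal vertex set inducing a connected subgraph with no cut vertex. -/
def IsBlock (G : SimpleGraph V) (B : Set V) : Prop :=
  (G.induce B).Connected ∧ (∀ v : B, ¬ IsCutVertex (G.induce B) v) ∧
  ∀ C : Set V, B ⊆ C → (G.induce C).Connected → (∀ v : C, ¬ IsCutVertex (G.induce C) v) →
    B = C

/-! SLEE G = ∑ₖ tr (Q Gᵏ) / k!, and the signless Laplacian Q G is entrywise nonnegative and
entrywise monotone in G, so SLEE strictly increases when edges are added: already the k = 1 term,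
tr (Q G) = 2 |E G|, does. A graph of diameter 2 is not complete, so after relabelling its vertices
it misses the edge ab, i.e. it is a spanning subgraph of Kₙ − ab; and SLEE, being a function of
the characteristic polynomial of Q G, is invariant under relabelling. -/

open Matrix Finset SimpleGraph
open scoped Nat

section NonnegMatrix

variable {n R : Type*} [Fintype n] [DecidableEq n] [Semiring R] [PartialOrder R]
  [IsOrderedRing R] {A B : Matrix n n R}

theorem Matrix.pow_apply_le_pow_apply (hA : ∀ i j, 0 ≤ A i j) (hAB : ∀ i j, A i j ≤ B i j)
    (k : ℕ) (i j : n) : (A ^ k) i j ≤ (B ^ k) i j := by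
  induction k generalizing j with
  | zero => rfl
  | succ k ih =>
    rw [pow_succ, pow_succ, mul_apply, mul_apply]
    exact sum_le_sum fun l _ => mul_le_mul (ih l) (hAB l j) (hA l j)
      ((pow_apply_nonneg hA k i l).trans (ih l))

theorem Matrix.trace_pow_le_trace_pow (hA : ∀ i j, 0 ≤ A i j) (hAB : ∀ i j, A i j ≤ B i j)
    (k : ℕ) : (A ^ k).trace ≤ (B ^ k).trace :=
  sum_le_sum fun i _ => pow_apply_le_pow_apply hA hAB k i i

end NonnegMatrix

theorem Matrix.IsHermitian.trace_pow {n 𝕜 : Type*} [Fintype n] [DecidableEq n] [RCLike 𝕜]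
    {A : Matrix n n 𝕜} (hA : A.IsHermitian) (k : ℕ) :
    (A ^ k).trace = ∑ i, (hA.eigenvalues i ^ k : 𝕜) := by
  rw [← cfc_pow_id (R := ℝ) A k hA.isSelfAdjoint, hA.cfc_eq, IsHermitian.cfc,
    Unitary.conjStarAlgAut_apply, trace_mul_cycle, Unitary.star_mul_self_of_mem (SetLike.coe_mem _),
    one_mul, trace_diagonal]
  simp

theorem Matrix.IsHermitian.hasSum_trace_pow_div_factorial {n : Type*} [Fintype n]
    [DecidableEq n] {A : Matrix n n ℝ} (hA : A.IsHermitian) :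
    HasSum (fun k => (A ^ k).trace / k !) (∑ i, Real.exp (hA.eigenvalues i)) := by
  simp_rw [hA.trace_pow, sum_div]
  refine hasSum_sum fun i _ => ?_
  rw [Real.exp_eq_exp_ℝ]
  exact NormedSpace.expSeries_div_hasSum_exp _

section SLEE

variable {W : Type*} [Fintype V] [Fintype W]

theorem SimpleGraph.Iso.reindex_sLap {G : SimpleGraph V} {G' : SimpleGraph W} (e : G ≃g G') :
    (sLap G).reindex e e = sLap G' := by
  ext i j
  obtain ⟨i, rfl⟩ := e.surjective i
  obtain ⟨j, rfl⟩ := e.surjective j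
  simp [sLap, diagonal_apply, adjMatrix_apply, e.map_adj_iff]

theorem SLEE_eq_sum_exp_roots_charpoly (G : SimpleGraph V) :
    SLEE G = ((sLap G).charpoly.roots.map Real.exp).sum := by
  rw [(sLap_isHermitian G).roots_charpoly_eq_eigenvalues, Multiset.map_map, SLEE]
  rfl

theorem SimpleGraph.Iso.SLEE_eq {G : SimpleGraph V} {G' : SimpleGraph W} (e : G ≃g G') :
    SLEE G = SLEE G' := by
  rw [SLEE_eq_sum_exp_roots_charpoly, SLEE_eq_sum_exp_roots_charpoly, ← e.reindex_sLap,
    charpoly_reindex]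

theorem hasSum_trace_sLap_pow_div_factorial (G : SimpleGraph V) :
    HasSum (fun k => (sLap G ^ k).trace / k !) (SLEE G) :=
  (sLap_isHermitian G).hasSum_trace_pow_div_factorial

theorem sLap_apply_nonneg (G : SimpleGraph V) (i j : V) : 0 ≤ sLap G i j := by
  simp only [sLap, Matrix.add_apply, diagonal_apply, adjMatrix_apply]
  split_ifs <;> positivity

theorem sLap_apply_mono {G H : SimpleGraph V} (h : G ≤ H) (i j : V) :
    sLap G i j ≤ sLap H i j := by
  have hdeg : G.degree i ≤ H.degree i := card_le_card fun w => by simpa using @h i w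
  simp only [sLap, Matrix.add_apply, diagonal_apply, adjMatrix_apply]
  by_cases hij : i = j
  · subst hij; simp [hdeg]
  · by_cases hG : G.Adj i j
    · simp [hij, hG, h hG]
    · by_cases hH : H.Adj i j <;> simp [hij, hG, hH]

theorem trace_sLap (G : SimpleGraph V) : (sLap G).trace = 2 * #G.edgeFinset := by
  rw [sLap, trace_add, trace_adjMatrix, add_zero, trace_diagonal, ← Nat.cast_sum,
    sum_degrees_eq_twice_card_edges]
  push_cast; rfl

theorem SLEE_strictMono : StrictMono (fun G : SimpleGraph V => SLEE G) := by
  intro G H h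
  refine hasSum_lt (i := 1) (fun k => ?_) ?_ (hasSum_trace_sLap_pow_div_factorial G)
    (hasSum_trace_sLap_pow_div_factorial H)
  · exact div_le_div_of_nonneg_right
      (trace_pow_le_trace_pow (sLap_apply_nonneg G) (sLap_apply_mono h.le) k) (by positivity)
  · simp only [pow_one, Nat.factorial_one, Nat.cast_one, div_one, trace_sLap]
    exact_mod_cast Nat.mul_lt_mul_of_pos_left (card_lt_card (edgeFinset_strict_mono h)) two_pos

end SLEE

namespace SimpleGraph

variable {a b c : V}

theorem le_top_deleteEdges_singleton_iff {G : SimpleGraph V} :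
    G ≤ (⊤ : SimpleGraph V).deleteEdges {s(a, b)} ↔ ¬ G.Adj a b := by
  refine ⟨fun h hab => by simpa using h hab, fun h u v huv => ?_⟩
  simp only [deleteEdges_adj, top_adj, Set.mem_singleton_iff, Sym2.eq_iff, huv.ne, ne_eq,
    not_false_eq_true, true_and, not_or, not_and]
  exact ⟨fun hu hv => h (hu ▸ hv ▸ huv), fun hu hv => h (hu ▸ hv ▸ huv.symm)⟩

theorem edist_top_deleteEdges_singleton (hab : a ≠ b) (hca : c ≠ a) (hcb : c ≠ b) :
    ((⊤ : SimpleGraph V).deleteEdges {s(a, b)}).edist a b = 2 :=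
  edist_eq_two_iff.mpr ⟨hab, by simp [deleteEdges_adj], c,
    by simp [mem_commonNeighbors, hca, hcb, hca.symm, hcb.symm]⟩

theorem diam_top_deleteEdges_singleton (hab : a ≠ b) (hca : c ≠ a) (hcb : c ≠ b) :
    ((⊤ : SimpleGraph V).deleteEdges {s(a, b)}).diam = 2 := by
  set K := (⊤ : SimpleGraph V).deleteEdges {s(a, b)}
  have hKab : K.edist a b = 2 := edist_top_deleteEdges_singleton hab hca hcb
  have hle : ∀ u v, K.edist u v ≤ 2 := by
    intro u v
    by_cases huv : K.Adj u v
    · rw [edist_eq_one_iff_adj.mpr huv]; norm_num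
    obtain rfl | hne := eq_or_ne u v
    · simp
    obtain ⟨rfl, rfl⟩ | ⟨rfl, rfl⟩ : (u = a ∧ v = b) ∨ (u = b ∧ v = a) := by
      simp only [K, deleteEdges_adj, top_adj, Set.mem_singleton_iff, Sym2.eq_iff] at huv
      tauto
    · exact hKab.le
    · exact (edist_comm.trans hKab).le
  rw [diam, le_antisymm (ediam_le_of_edist_le hle) (hKab ▸ edist_le_ediam)]
  rfl

theorem exists_iso_le_top_deleteEdges_singleton {H : SimpleGraph V} (hH : H ≠ ⊤)
    (hab : a ≠ b) :
    ∃ H' : SimpleGraph V, Nonempty (H ≃g H') ∧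
      H' ≤ (⊤ : SimpleGraph V).deleteEdges {s(a, b)} := by
  obtain ⟨x, y, hxy, hnadj⟩ := ne_top_iff_exists_not_adj.mp hH
  have inj {p q : V} (hpq : p ≠ q) : Function.Injective ![p, q] := by
    intro i j; fin_cases i <;> fin_cases j <;> simp [hpq, hpq.symm]
  obtain ⟨σ, hσ⟩ := Equiv.Perm.exists_extending_pair ![x, y] ![a, b] (inj hxy) (inj hab)
  refine ⟨H.map σ.toEmbedding, ⟨Iso.map σ H⟩, le_top_deleteEdges_singleton_iff.mpr ?_⟩
  have hσx : σ x = a := hσ 0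
  have hσy : σ y = b := hσ 1
  rw [← hσx, ← hσy]
  exact (Iso.map σ H).map_adj_iff.not.mpr hnadj

end SimpleGraph

/-- `Kₙ − e` is the unique graph with maximum SLEE among graphs on `n ≥ 3`
vertices with diameter 2. -/
theorem max_SLEE_diam_two [Fintype V] {n : ℕ} (hn : Fintype.card V = n) (h3 : 3 ≤ n)
    (a b : V) (hab : a ≠ b) :
    ((⊤ : SimpleGraph V).deleteEdges {s(a, b)}).diam = 2 ∧
    ∀ H : SimpleGraph V, H.diam = 2 →
      SLEE H ≤ SLEE ((⊤ : SimpleGraph V).deleteEdges {s(a, b)}) ∧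
      (SLEE H = SLEE ((⊤ : SimpleGraph V).deleteEdges {s(a, b)}) →
        Nonempty (H ≃g (⊤ : SimpleGraph V).deleteEdges {s(a, b)})) := by
  obtain ⟨c, hc⟩ : ({a, b}ᶜ : Finset V).Nonempty := by
    rw [← card_pos, card_compl, card_pair hab]; omega
  simp only [mem_compl, mem_insert, mem_singleton, not_or] at hc
  refine ⟨diam_top_deleteEdges_singleton hab hc.1 hc.2, fun H hH => ?_⟩
  have : Nontrivial V := ⟨a, b, hab⟩
  have hHtop : H ≠ ⊤ := by rintro rfl; simp at hH
  obtain ⟨H', ⟨e⟩, hle⟩ := exists_iso_le_top_deleteEdges_singleton hHtop hab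
  rw [e.SLEE_eq]
  rcases hle.eq_or_lt with rfl | hlt
  · exact ⟨le_rfl, fun _ => ⟨e⟩⟩
  · have hSLEE := SLEE_strictMono hlt
    exact ⟨hSLEE.le, fun h => absurd h hSLEE.ne⟩
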